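/- Worst-case adversarial bound for the GP algorithm: for all m f : ℕ with f ≤ m and every b : ℕ → Bool such that the set {i | b i = false} has at most f elements, HGP m b ≤ f + ⌈log₂ (m + 1 − f)⌉ (where ⌈log₂ x⌉ = Nat.clog 2 x). That is, with at most f initial node failures the GP algorithm informing m initially uninformed processors terminates within f + ⌈log₂ (m+1−f)⌉ rounds. -/

import Mathlib

/-! If the first request fails, the algorithm spends one round and one failure, so the bound
for `(m, f)` follows from the bound for `(m - 1, f - 1)`. If it succeeds, the remaining
processors split into two halves of size `k` with `2 k < m`, each facing at most `f` failures;
then `k + 1 - f ≤ ⌈(m + 1 - f) / 2⌉`, so the logarithmic term of each half is one smaller,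
which pays for the round spent. Once `f ≥ m`, the trivial bound `HGP m b ≤ m` suffices. -/

def tailSeq (b : ℕ → Bool) : ℕ → Bool := fun i => b (i+1)
def oddSeq (b : ℕ → Bool) : ℕ → Bool := fun i => b (2*i)
def evenSeq (b : ℕ → Bool) : ℕ → Bool := fun i => b (2*i+1)

/-- Time complexity of the GP algorithm with `n` uninformed processors under
failure pattern `b` (`b i = true` means the `i`-th request is successful). -/
def HGP : ℕ → (ℕ → Bool) → ℕ
  | 0, _ => 0
  | n+1, b =>
    if b 0 then
      1 + max (HGP ((n+1)/2) (oddSeq (tailSeq b))) (HGP (n/2) (evenSeq (tailSeq b)))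
    else
      1 + HGP n (tailSeq b)
decreasing_by all_goals omega

def failures (b : ℕ → Bool) : Set ℕ := {i | b i = false}

section HGP

variable {n : ℕ} {b : ℕ → Bool}

theorem HGP_succ_of_true (h : b 0 = true) :
    HGP (n + 1) b =
      1 + max (HGP ((n + 1) / 2) (oddSeq (tailSeq b))) (HGP (n / 2) (evenSeq (tailSeq b))) := by
  rw [HGP, if_pos h]

theorem HGP_succ_of_false (h : b 0 = false) : HGP (n + 1) b = 1 + HGP n (tailSeq b) := by
  rw [HGP, if_neg (by simp [h])]

theorem HGP_le_self (n : ℕ) (b : ℕ → Bool) : HGP n b ≤ n := by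
  induction n using Nat.strong_induction_on generalizing b with
  | _ n ih =>
    rcases n with _ | n
    · simp [HGP]
    rcases (b 0).eq_false_or_eq_true with h | h
    · have := ih ((n + 1) / 2) (by omega) (oddSeq (tailSeq b))
      have := ih (n / 2) (by omega) (evenSeq (tailSeq b))
      rw [HGP_succ_of_true h]
      omega
    · have := ih n (by omega) (tailSeq b)
      rw [HGP_succ_of_false h]
      omega

end HGP

section failures

variable {b : ℕ → Bool}

theorem encard_failures_comp_le {g : ℕ → ℕ} (hg : Function.Injective g) :
    (failures (b ∘ g)).encard ≤ (failures b).encard := by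
  rw [← hg.encard_image]
  exact Set.encard_mono (Set.image_preimage_subset g (failures b))

theorem encard_failures_oddSeq_tailSeq_le :
    (failures (oddSeq (tailSeq b))).encard ≤ (failures b).encard :=
  encard_failures_comp_le (g := fun i => 2 * i + 1) fun i j h => by simp at h; omega

theorem encard_failures_evenSeq_tailSeq_le :
    (failures (evenSeq (tailSeq b))).encard ≤ (failures b).encard :=
  encard_failures_comp_le (g := fun i => 2 * i + 1 + 1) fun i j h => by simp at h; omega

theorem encard_failures_tailSeq_add_one (h : b 0 = false) :
    (failures (tailSeq b)).encard + 1 = (failures b).encard := by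
  have hsplit : failures b = insert 0 (Nat.succ '' failures (tailSeq b)) := by
    ext (_ | i) <;> simp [failures, tailSeq, h]
  rw [hsplit, Set.encard_insert_of_notMem (by simp), Nat.succ_injective.encard_image]

end failures

theorem clog_two_succ_sub_add_one_le {N k f : ℕ} (hf : f + 2 ≤ N) (hk : 2 * k < N) :
    Nat.clog 2 (k + 1 - f) + 1 ≤ Nat.clog 2 (N - f) := by
  rw [Nat.clog_of_two_le (n := N - f) one_lt_two (by omega)]
  exact Nat.add_le_add_right (Nat.clog_mono_right 2 (by omega)) 1

theorem hgp_adversarial_bound_general (m f : ℕ) (b : ℕ → Bool)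
    (hb : {i | b i = false}.encard ≤ f) :
    HGP m b ≤ f + Nat.clog 2 (m + 1 - f) := by
  induction m using Nat.strong_induction_on generalizing f b with
  | _ m ih =>
    obtain hf | hf := le_or_gt m f
    · exact (HGP_le_self m b).trans (Nat.le_add_right_of_le hf)
    obtain ⟨n, rfl⟩ : ∃ n, m = n + 1 := Nat.exists_eq_add_one_of_ne_zero (by omega)
    rcases (b 0).eq_false_or_eq_true with h | h
    · have hodd := ih ((n + 1) / 2) (by omega) f _ (encard_failures_oddSeq_tailSeq_le.trans hb)
      have heven := ih (n / 2) (by omega) f _ (encard_failures_evenSeq_tailSeq_le.trans hb)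
      have hodd_clog := clog_two_succ_sub_add_one_le (k := (n + 1) / 2) (N := n + 1 + 1) (f := f)
        (by omega) (by omega)
      have heven_clog := clog_two_succ_sub_add_one_le (k := n / 2) (N := n + 1 + 1) (f := f)
        (by omega) (by omega)
      rw [HGP_succ_of_true h]
      omega
    · have htail : (failures (tailSeq b)).encard + 1 ≤ f :=
        (encard_failures_tailSeq_add_one h).trans_le hb
      rcases f with _ | g
      · simp at htail
      rw [Nat.cast_succ, ENat.add_le_add_iff_right ENat.one_ne_top] at htail
      have hrest := ih n (by omega) g _ htail
      rw [HGP_succ_of_false h, show n + 1 + 1 - (g + 1) = n + 1 - g by omega]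
      omega

/-- With at most `f` initial node failures, the GP algorithm informing `m`
initially uninformed processors terminates within `f + ⌈log₂ (m+1-f)⌉` rounds. -/
theorem hgp_adversarial_bound (m f : ℕ) (hfm : f ≤ m) (b : ℕ → Bool)
    (hb : {i | b i = false}.encard ≤ f) :
    HGP m b ≤ f + Nat.clog 2 (m + 1 - f) :=
  hgp_adversarial_bound_general m f b hb
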